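/- arXiv:1806.03603 — 3 statements merged into one kernel-verified Lean document; each statement's English description precedes it below -/
import Mathlib

section
/- Let F be a field of characteristic p > 0, let α ∈ F and β, γ ∈ F^× with γ ≠ 0, and set t = α + (α - β)/γ. Then in the symbol p-algebra [α,γ)_{p,F} = F⟨x,y : x^p - x = α, y^p = γ, yxy^{-1} = x+1⟩, the element z = x + t·y + x·y satisfies z^p - z = t^p·γ + β. In particular, [α,γ)_{p,F} contains the étale F-algebra F[z : z^p - z = t^p·γ + β]. -/
noncomputable section
namespace PaperSymbol

variable (F : Type) [Field F] (p : ℕ) (α γ : F)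

/-- The defining relations of the symbol `p`-algebra `[α,γ)_{p,F}`:
`x^p - x = α`, `y^p = γ` and `y x = (x+1) y` (i.e. `y x y⁻¹ = x + 1`). -/
inductive SymbolRel : FreeAlgebra F (Fin 2) → FreeAlgebra F (Fin 2) → Prop
  | relx : SymbolRel (FreeAlgebra.ι F (0 : Fin 2) ^ p - FreeAlgebra.ι F (0 : Fin 2))
      (algebraMap F _ α)
  | rely : SymbolRel (FreeAlgebra.ι F (1 : Fin 2) ^ p) (algebraMap F _ γ)
  | relcomm : SymbolRel (FreeAlgebra.ι F (1 : Fin 2) * FreeAlgebra.ι F (0 : Fin 2))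
      ((FreeAlgebra.ι F (0 : Fin 2) + 1) * FreeAlgebra.ι F (1 : Fin 2))

/-- The symbol `p`-algebra `[α,γ)_{p,F} = F⟨x,y : x^p - x = α, y^p = γ, yxy⁻¹ = x+1⟩`. -/
def SymbolAlgebra : Type := RingQuot (SymbolRel F p α γ)

instance : Ring (SymbolAlgebra F p α γ) := inferInstanceAs (Ring (RingQuot _))
instance : Algebra F (SymbolAlgebra F p α γ) := inferInstanceAs (Algebra F (RingQuot _))

/-- The generator `x` of the symbol algebra. -/
def xgen : SymbolAlgebra F p α γ :=
  RingQuot.mkAlgHom F (SymbolRel F p α γ) (FreeAlgebra.ι F (0 : Fin 2))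

/-- The generator `y` of the symbol algebra. -/
def ygen : SymbolAlgebra F p α γ :=
  RingQuot.mkAlgHom F (SymbolRel F p α γ) (FreeAlgebra.ι F (1 : Fin 2))

end PaperSymbol

/-!
Write `x, y` for the generators and `c` for the image of `t`. The element `z` is `x + v` with
`v = (x + c) y`, and `v` again satisfies `v x = (x + 1) v`. For any such pair in characteristic
`p`, Jacobson's formula collapses to `(x + v)^p = x^p + v + v^p`: the derivative of
`(x + T v)^p` in `T` is `((q + 1)^p - q^p) v = v` with `q = x + T v`, because `v q = (q + 1) v`,
so of the coefficients of `(x + T v)^p` only those of `1`, `T` and `T^p` survive.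
Moreover `v^p = (x + c)(x + c + 1)⋯(x + c + p - 1) y^p = ((x + c)^p - (x + c)) γ`, so
`z^p - z = (x^p - x) + v^p = α + (α + t^p - t) γ`, which equals `t^p γ + β` by the choice of `t`.
-/

section JacobsonFormula

open Polynomial

variable {A : Type*} [Ring A]

theorem Polynomial.derivative_pow_of_semiconjBy {q : A[X]}
    (h : SemiconjBy (derivative q) q (q + 1)) (n : ℕ) :
    derivative (q ^ n) = ((q + 1) ^ n - q ^ n) * derivative q := by
  induction n with
  | zero => simp
  | succ n ih =>
    rw [pow_succ, derivative_mul, ih, mul_assoc, h.eq]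
    noncomm_ring

theorem Polynomial.eq_C_add_C_mul_X_add_C_mul_X_pow_of_derivative_eq_C (p : ℕ)
    [hp : Fact p.Prime] [CharP A p] {f : A[X]} {a : A} (hdeg : f.natDegree ≤ p)
    (hder : derivative f = C a) :
    f = C (f.coeff 0) + C a * X + C (f.coeff p) * X ^ p := by
  have hp2 := hp.out.two_le
  ext n
  simp only [coeff_add, coeff_C, coeff_C_mul_X, coeff_C_mul_X_pow]
  rcases n with _ | _ | n
  · simp [hp.out.ne_zero.symm]
  · have h1 : f.coeff 1 = a := by simpa [coeff_derivative] using congrArg (coeff · 0) hder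
    simp [h1, hp.out.ne_one.symm]
  have hn : f.coeff (n + 2) * ((n + 2 : ℕ) : A) = 0 := by
    rw [Nat.cast_succ, ← coeff_derivative, hder, coeff_C, if_neg n.succ_ne_zero]
  rcases lt_trichotomy (n + 2) p with hlt | rfl | hgt
  · have hunit : IsUnit ((n + 2 : ℕ) : A) :=
      (CharP.isUnit_natCast_iff hp.out).2 (Nat.not_dvd_of_pos_of_lt (by omega) hlt)
    simp [hunit.mul_left_eq_zero.1 hn, hlt.ne]
  · simp
  · simp [coeff_eq_zero_of_natDegree_lt (hdeg.trans_lt hgt), hgt.ne']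

theorem add_pow_char_of_semiconjBy (p : ℕ) [Fact p.Prime] [CharP A p] {x v : A}
    (h : SemiconjBy v x (x + 1)) :
    (x + v) ^ p = x ^ p + v + v ^ p := by
  set q : A[X] := C v * X + C x
  have hder : derivative q = C v := by simp [q]
  have hsemi : SemiconjBy (derivative q) q (q + 1) := by
    have hC : C v * C x = (C x + 1) * C v := by rw [← C_mul, h.eq, C_mul, C_add, C_1]
    rw [hder]
    show C v * (C v * X + C x) = (C v * X + C x + 1) * C v
    rw [mul_add, hC, add_mul, add_mul, add_mul, mul_assoc (C v) X, (commute_X (C v)).eq]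
    abel
  have hderp : derivative (q ^ p) = C v := by
    rw [derivative_pow_of_semiconjBy hsemi, add_pow_char_of_commute p (Commute.one_right q), hder]
    simp
  have hqp := eq_C_add_C_mul_X_add_C_mul_X_pow_of_derivative_eq_C p
    ((natDegree_pow_le_of_le p natDegree_linear_le).trans_eq (mul_one p)) hderp
  have hcoeff0 : (q ^ p).coeff 0 = x ^ p := by
    rw [← constantCoeff_apply, map_pow, constantCoeff_apply]
    simp [q]
  have hcoeffp : (q ^ p).coeff p = v ^ p := by
    simpa [q] using coeff_pow_of_natDegree_le (m := p) (natDegree_linear_le (a := v) (b := x))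
  have := congrArg (eval₂RingHom' (RingHom.id A) 1 (fun a => Commute.one_right a)) hqp
  simp only [map_pow, map_add, map_mul, q, hcoeff0, hcoeffp] at this
  simpa [add_comm] using this

end JacobsonFormula

section Pochhammer

open Polynomial

theorem ascPochhammer_zmod_eq_X_pow_sub_X (p : ℕ) [hp : Fact p.Prime] :
    ascPochhammer (ZMod p) p = X ^ p - X := by
  have hmonic : (X ^ p - X : (ZMod p)[X]).Monic := by
    apply monic_X_pow_sub; simp [hp.out.one_lt]
  have hdeg : (X ^ p - X : (ZMod p)[X]).degree = p := by
    rw [degree_sub_eq_left_of_degree_lt] <;> simp [hp.out.one_lt]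
  have hdeg' : (ascPochhammer (ZMod p) p).degree = p := by
    rw [degree_eq_natDegree (monic_ascPochhammer _ p).ne_zero, ascPochhammer_natDegree]
  refine eq_of_degree_sub_lt_of_eval_finset_eq Finset.univ ?_ ?_
  · rw [Finset.card_univ, ZMod.card, ← hdeg']
    exact degree_sub_lt_left (hdeg'.trans hdeg.symm) (monic_ascPochhammer _ p).ne_zero
      (by rw [(monic_ascPochhammer _ p).leadingCoeff, hmonic.leadingCoeff])
  · intro a _
    obtain ⟨k, rfl⟩ := ZMod.natCast_zmod_surjective a
    rw [← ascPochhammer_eval_cast, ascPochhammer_nat_eq_ascFactorial]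
    simp only [eval_sub, eval_pow, eval_X, ZMod.pow_card, sub_self]
    exact (ZMod.natCast_eq_zero_iff _ _).2
      ((Nat.dvd_factorial hp.out.pos le_rfl).trans (Nat.factorial_dvd_ascFactorial k p))

variable {A : Type*} [Ring A]

theorem aeval_ascPochhammer_char (p : ℕ) [Fact p.Prime] [CharP A p] (w : A) :
    aeval w (ascPochhammer ℕ p) = w ^ p - w := by
  let := ZMod.algebra A p
  rw [← aeval_map_algebraMap (ZMod p), ascPochhammer_map, ascPochhammer_zmod_eq_X_pow_sub_X]
  simp

theorem mul_pow_eq_aeval_ascPochhammer_mul_pow {w y : A} (h : SemiconjBy y w (w + 1)) (n : ℕ) :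
    (w * y) ^ n = aeval w (ascPochhammer ℕ n) * y ^ n := by
  have hpow : ∀ n : ℕ, SemiconjBy (y ^ n) w (w + n) := by
    intro n
    induction n with
    | zero => simp [SemiconjBy]
    | succ n ih =>
      rw [pow_succ', Nat.cast_succ, ← add_assoc, add_right_comm]
      exact (h.add_right (Nat.cast_commute n y).symm).mul_left ih
  induction n with
  | zero => simp
  | succ n ih =>
    rw [pow_succ, ih, ascPochhammer_succ_right, map_mul, pow_succ, mul_assoc,
      ← mul_assoc (y ^ n), (hpow n).eq]
    simp [mul_assoc]

end Pochhammer

namespace PaperSymbol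

variable {F : Type} [Field F] {p : ℕ} {α γ : F}

theorem xgen_pow_sub_xgen : xgen F p α γ ^ p - xgen F p α γ = algebraMap F _ α := by
  have h := RingQuot.mkAlgHom_rel F (SymbolRel.relx (F := F) (p := p) (α := α) (γ := γ))
  simp only [map_sub, map_pow, AlgHom.commutes] at h
  exact h

theorem ygen_pow : ygen F p α γ ^ p = algebraMap F _ γ := by
  have h := RingQuot.mkAlgHom_rel F (SymbolRel.rely (F := F) (p := p) (α := α) (γ := γ))
  simp only [map_pow, AlgHom.commutes] at h
  exact h

theorem semiconjBy_ygen_xgen : SemiconjBy (ygen F p α γ) (xgen F p α γ) (xgen F p α γ + 1) := by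
  have h := RingQuot.mkAlgHom_rel F (SymbolRel.relcomm (F := F) (p := p) (α := α) (γ := γ))
  simp only [map_mul, map_add, map_one] at h
  exact h

theorem pow_sub_self_xgen_add_mul_ygen [Fact p.Prime] [CharP F p] (c : F) :
    (xgen F p α γ + (xgen F p α γ + algebraMap F _ c) * ygen F p α γ) ^ p -
        (xgen F p α γ + (xgen F p α γ + algebraMap F _ c) * ygen F p α γ) =
      algebraMap F _ (α + (α + c ^ p - c) * γ) := by
  rcases subsingleton_or_nontrivial (SymbolAlgebra F p α γ) with _ | _
  · exact Subsingleton.elim _ _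
  have : CharP (SymbolAlgebra F p α γ) p := charP_of_injective_algebraMap' F p
  set x := xgen F p α γ
  set y := ygen F p α γ
  set w := x + algebraMap F _ c with hw
  have hxc : Commute x (algebraMap F _ c) := Algebra.commute_algebraMap_right c x
  have hyw : SemiconjBy y w (w + 1) := by
    have := semiconjBy_ygen_xgen.add_right (Algebra.commute_algebraMap_right c y)
    rwa [add_right_comm] at this
  have hx : x ^ p - x = algebraMap F _ α := xgen_pow_sub_xgen
  have hvx : SemiconjBy (w * y) x (x + 1) :=
    SemiconjBy.mul_left ((Commute.refl x).add_left hxc.symm |>.add_right (Commute.one_right w))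
      semiconjBy_ygen_xgen
  have hwp : w ^ p - w = algebraMap F _ (α + c ^ p - c) := by
    rw [add_pow_char_of_commute p hxc, ← map_pow, map_sub, map_add, map_pow, ← hx, hw]
    abel
  rw [add_pow_char_of_semiconjBy p hvx, mul_pow_eq_aeval_ascPochhammer_mul_pow hyw,
    aeval_ascPochhammer_char, hwp, ygen_pow, ← map_mul, map_add, ← hx]
  abel

end PaperSymbol

open PaperSymbol in
theorem statement0_general (F : Type) [Field F] (p : ℕ) [Fact p.Prime] [CharP F p]
    (α β γ : F) (hγ : γ ≠ 0) (t : F) (ht : t = α + (α - β) / γ) :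
    ((xgen F p α γ + algebraMap F _ t * ygen F p α γ + xgen F p α γ * ygen F p α γ) ^ p -
        (xgen F p α γ + algebraMap F _ t * ygen F p α γ + xgen F p α γ * ygen F p α γ) =
      algebraMap F _ (t ^ p * γ + β)) ∧
      ∃ z : SymbolAlgebra F p α γ, z ^ p - z = algebraMap F _ (t ^ p * γ + β) := by
  have htγ : t * γ = α * γ + (α - β) := by
    rw [ht]; field_simp
  have key := pow_sub_self_xgen_add_mul_ygen (α := α) (γ := γ) t
  rw [add_mul, add_comm (xgen F p α γ * _), ← add_assoc,
    show α + (α + t ^ p - t) * γ = t ^ p * γ + β by linear_combination -htγ] at key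
  exact ⟨key, _, key⟩

open PaperSymbol in
/-- Lemma 3.1. Let `F` be a field of characteristic `p > 0`,
`α ∈ F`, `β, γ ∈ F^×`, and `t = α + (α - β)/γ`.  In the symbol `p`-algebra
`[α,γ)_{p,F}` the element `z = x + t·y + x·y` satisfies `z^p - z = t^p·γ + β`;
in particular `[α,γ)_{p,F}` contains the étale extension
`F[z : z^p - z = t^pγ + β]` of `F`. -/
theorem statement0 (F : Type) [Field F] (p : ℕ) [Fact p.Prime] [CharP F p]
    (α β γ : F) (hβ : β ≠ 0) (hγ : γ ≠ 0) (t : F) (ht : t = α + (α - β) / γ) :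
    ((xgen F p α γ + algebraMap F _ t * ygen F p α γ + xgen F p α γ * ygen F p α γ) ^ p -
        (xgen F p α γ + algebraMap F _ t * ygen F p α γ + xgen F p α γ * ygen F p α γ) =
      algebraMap F _ (t ^ p * γ + β)) ∧
      ∃ z : SymbolAlgebra F p α γ, z ^ p - z = algebraMap F _ (t ^ p * γ + β) :=
  statement0_general F p α β γ hγ t ht
end
end

section
/- Let F be a field of characteristic p > 0 and let α, β, γ ∈ F^× with t = α + (α-β)/γ. If t^p·γ + β ≠ 0, then in the group H_p^2(F) (the cokernel of the Artin–Schreier map ℘ : Ω_F^1 → Ω_F^1/dΩ_F^0), the identity α·(dβ/β) ∧ (dγ/γ) = α·(d(βγ^{-1})/(βγ^{-1})) ∧ (d(t^pγ+β)/(t^pγ+β)) holds, where ∧ here denotes the class of the 2-form α·(dβ/β)∧(dγ/γ) in H_p^2(F). -/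
/-! The identity holds already between the 2-forms, for any `t`. Since `d(t^p) = 0`, the element
`s = t^p γ + β` satisfies `s · dlog s = t^p γ · dlog γ + β · dlog β`; wedging this with
`dlog(βγ⁻¹) = dlog β - dlog γ` gives `s · dlog(βγ⁻¹) ∧ dlog s = s · dlog β ∧ dlog γ`. -/

noncomputable section
namespace PaperKM

variable (p : ℕ) (F : Type) [Field F] [CharP F p] [Algebra (ZMod p) F]

/-- The pure wedge `v₁ ∧ … ∧ vₙ` as an element of the `n`-th exterior power. -/
def wedgeN {R M : Type} [CommRing R] [AddCommGroup M] [Module R M] {n : ℕ}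
    (v : Fin n → M) : ⋀[R]^n M :=
  ⟨ExteriorAlgebra.ιMulti R n v, ExteriorAlgebra.ιMulti_range R n (Set.mem_range_self v)⟩

/-- Wedging an element of the `n`-th exterior power with a single vector. -/
def wedge1 {R M : Type} [CommRing R] [AddCommGroup M] [Module R M] {n : ℕ}
    (x : ⋀[R]^n M) (m : M) : ⋀[R]^(n + 1) M :=
  ⟨x.1 * ExteriorAlgebra.ι R m, by
    have h := Submodule.mul_mem_mul x.2
      (LinearMap.mem_range_self (ExteriorAlgebra.ι R : M →ₗ[R] ExteriorAlgebra R M) m)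
    rw [← pow_succ] at h
    exact h⟩

/-- The logarithmic differential `db/b ∈ Ω¹_F`. -/
def dlog (b : F) : Ω[F⁄ZMod p] := b⁻¹ • (KaehlerDifferential.D (ZMod p) F) b

/-- The subgroup of `Ω^n_F` generated by exact forms `da₀ ∧ da₁ ∧ … ∧ da_{n-1}`
(i.e. `dΩ^{n-1}`) together with the image of the Artin–Schreier map
`℘(a · dlog b₁ ∧ … ∧ dlog bₙ) = (a^p - a) · dlog b₁ ∧ … ∧ dlog bₙ`. -/
def Rel (n : ℕ) : AddSubgroup (⋀[F]^n (Ω[F⁄ZMod p])) :=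
  AddSubgroup.closure
    ({x | ∃ a : Fin n → F, x = wedgeN fun i => (KaehlerDifferential.D (ZMod p) F) (a i)} ∪
      {x | ∃ (a : F) (b : Fin n → F), (∀ i, b i ≠ 0) ∧
        x = (a ^ p - a) • wedgeN fun i => dlog p F (b i)})

/-- The Kato–Milne cohomology group `H_p^{n+1}(F)`, realised as the group of classes of
`n`-forms: the cokernel of `℘ : Ω^n → Ω^n/dΩ^{n-1}`. -/
def Hq (n : ℕ) : Type := (⋀[F]^n (Ω[F⁄ZMod p])) ⧸ Rel p F n

instance (n : ℕ) : AddCommGroup (Hq p F n) :=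
  inferInstanceAs (AddCommGroup (_ ⧸ Rel p F n))

/-- The class of an `n`-form in `H_p^{n+1}(F)`. -/
def Hmk {n : ℕ} : (⋀[F]^n (Ω[F⁄ZMod p])) →+ Hq p F n := QuotientAddGroup.mk' _

/-- The group `ν_F(n)`: the subgroup of `Ω^n` generated by the `n`-fold wedges of
logarithmic differentials `dlog b₁ ∧ … ∧ dlog bₙ`. -/
def nu (n : ℕ) : AddSubgroup (⋀[F]^n (Ω[F⁄ZMod p])) :=
  AddSubgroup.closure
    {x | ∃ b : Fin n → F, (∀ i, b i ≠ 0) ∧ x = wedgeN fun i => dlog p F (b i)}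

end PaperKM
namespace PaperKM

section Wedge

variable {R M : Type} [CommRing R] [AddCommGroup M] [Module R M]

theorem wedgeN_pair_val (u v : M) :
    (wedgeN (R := R) ![u, v]).1 = ExteriorAlgebra.ι R u * ExteriorAlgebra.ι R v := by
  simp [wedgeN, ExteriorAlgebra.ιMulti_apply]

theorem wedgeN_pair_smul_right (u v : M) (c : R) :
    wedgeN (R := R) ![u, c • v] = c • wedgeN ![u, v] := by
  apply Subtype.ext
  simp only [SetLike.val_smul, wedgeN_pair_val, map_smul, mul_smul_comm]

theorem wedgeN_sub_smul_add_smul (u v : M) (a b : R) :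
    wedgeN (R := R) ![u - v, a • v + b • u] = (a + b) • wedgeN ![u, v] := by
  apply Subtype.ext
  have hswap := ExteriorAlgebra.ι_add_mul_swap (R := R) u v
  simp only [SetLike.val_smul, wedgeN_pair_val, map_sub, map_add, map_smul, sub_mul, mul_add,
    mul_smul_comm, ExteriorAlgebra.ι_sq_zero]
  rw [eq_neg_of_add_eq_zero_right hswap]
  module

end Wedge

theorem derivation_map_pow_char {R A M : Type} [CommSemiring R] [CommRing A] [Algebra R A]
    [AddCommGroup M] [Module A M] [Module R M] [IsScalarTower R A M] (D : Derivation R A M)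
    (p : ℕ) [CharP A p] (a : A) : D (a ^ p) = 0 := by
  rw [Derivation.leibniz_pow, ← Nat.cast_smul_eq_nsmul A, CharP.cast_eq_zero, zero_smul]

section Dlog

variable (p : ℕ) {F : Type} [Field F] [Algebra (ZMod p) F]

theorem smul_dlog {b : F} (hb : b ≠ 0) :
    b • dlog p F b = KaehlerDifferential.D (ZMod p) F b := by
  rw [dlog, smul_smul, mul_inv_cancel₀ hb, one_smul]

theorem dlog_mul {a b : F} (ha : a ≠ 0) (hb : b ≠ 0) :
    dlog p F (a * b) = dlog p F a + dlog p F b := by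
  simp only [dlog, Derivation.leibniz, mul_inv, smul_add, smul_smul]
  rw [add_comm]
  congr 2 <;> field_simp

theorem dlog_inv (a : F) : dlog p F a⁻¹ = -dlog p F a := by
  rcases eq_or_ne a 0 with rfl | ha
  · simp [dlog]
  simp only [dlog, Derivation.leibniz_inv, inv_inv, smul_neg, smul_smul, neg_smul]
  field_simp

theorem dlog_mul_inv {a b : F} (ha : a ≠ 0) (hb : b ≠ 0) :
    dlog p F (a * b⁻¹) = dlog p F a - dlog p F b := by
  rw [dlog_mul p ha (inv_ne_zero hb), dlog_inv, sub_eq_add_neg]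

theorem smul_dlog_pow_char_mul_add [CharP F p] {t a b : F} (ha : a ≠ 0) (hb : b ≠ 0)
    (hs : t ^ p * a + b ≠ 0) :
    (t ^ p * a + b) • dlog p F (t ^ p * a + b) = (t ^ p * a) • dlog p F a + b • dlog p F b := by
  rw [smul_dlog p hs, smul_dlog p hb, mul_smul, smul_dlog p ha, map_add, Derivation.leibniz,
    derivation_map_pow_char, smul_zero, add_zero]

end Dlog

end PaperKM

open PaperKM in
theorem statement1_general (p : ℕ) (F : Type) [Field F] [CharP F p]
    [Algebra (ZMod p) F] (α β γ : F) (hβ : β ≠ 0) (hγ : γ ≠ 0)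
    (t : F) (hne : t ^ p * γ + β ≠ 0) :
    Hmk p F (α • wedgeN ![dlog p F β, dlog p F γ]) =
      Hmk p F (α • wedgeN ![dlog p F (β * γ⁻¹), dlog p F (t ^ p * γ + β)]) := by
  have hdlog : dlog p F (t ^ p * γ + β) =
      (t ^ p * γ + β)⁻¹ • ((t ^ p * γ) • dlog p F γ + β • dlog p F β) :=
    (eq_inv_smul_iff₀ hne).2 (smul_dlog_pow_char_mul_add p hγ hβ hne)
  rw [dlog_mul_inv p hβ hγ, hdlog, wedgeN_pair_smul_right, wedgeN_sub_smul_add_smul,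
    inv_smul_smul₀ hne]

open PaperKM in
/-- key identity in the proof of Proposition 3.2, cf.
Chapman–McKinnie, Lemma 5.1(e).  Let `F` be a field of characteristic `p > 0`,
`α, β, γ ∈ F^×` and `t = α + (α-β)/γ`.  If `t^pγ + β ≠ 0` then the classes of the
`2`-forms `α·(dβ/β) ∧ (dγ/γ)` and `α·(d(βγ⁻¹)/(βγ⁻¹)) ∧ (d(t^pγ+β)/(t^pγ+β))` agree in
the Kato–Milne cohomology group of classes of `2`-forms. -/
theorem statement1 (p : ℕ) [Fact p.Prime] (F : Type) [Field F] [CharP F p]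
    [Algebra (ZMod p) F] (α β γ : F) (hα : α ≠ 0) (hβ : β ≠ 0) (hγ : γ ≠ 0)
    (t : F) (ht : t = α + (α - β) / γ) (hne : t ^ p * γ + β ≠ 0) :
    Hmk p F (α • wedgeN ![dlog p F β, dlog p F γ]) =
      Hmk p F (α • wedgeN ![dlog p F (β * γ⁻¹), dlog p F (t ^ p * γ + β)]) :=
  statement1_general p F α β γ hβ hγ t hne
end
end

section
/- Let F be a field of characteristic 2. Let θ be an anisotropic n-fold bilinear Pfister form over F and θ' an (n−1)-fold bilinear Pfister form factor of θ. Let β ∈ F^× be an element represented by the quadratic form Q(θ) but not by Q(θ'). Then Q(θ) is isometric to Q(⟨⟨β⟩⟩ ⊗ θ'). -/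
open QuadraticMap

noncomputable section
namespace PaperQF

variable (F : Type) [Field F]

/-- The binary quadratic form `[a,b] : (x,y) ↦ a·x² + x·y + b·y²`. -/
def binaryF (a b : F) : QuadraticForm F (Fin 2 → F) :=
  a • proj (R := F) (n := Fin 2) 0 0 + proj (R := F) (n := Fin 2) 0 1 +
    b • proj (R := F) (n := Fin 2) 1 1

/-- The hyperbolic plane `[0,0]`. -/
def hyp : QuadraticForm F (Fin 2 → F) := binaryF F 0 0

/-- An orthogonal sum of `m` hyperbolic planes. -/
def mHyp (m : ℕ) : QuadraticForm F (Fin m → Fin 2 → F) :=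
  QuadraticMap.pi fun _ => hyp F

variable {F}

/-- The diagonal coefficients of the bilinear Pfister form `⟨⟨a₁,…,aₙ⟩⟩`. -/
def pfC {n : ℕ} (a : Fin n → F) : (Fin n → Bool) → F :=
  fun s => ∏ i, if s i then a i else 1

/-- The tensor product of the diagonal bilinear form `⟨c₁,…⟩` with a quadratic form `Q`,
i.e. the orthogonal sum of the scaled copies `cᵢ • Q`. -/
def sumScaled {ι : Type} [Fintype ι] (c : ι → F) {M : Type} [AddCommGroup M] [Module F M]
    (Q : QuadraticForm F M) : QuadraticForm F (ι → M) :=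
  QuadraticMap.pi fun i => c i • Q

/-- The quadratic `(k+1)`-fold Pfister form `⟨⟨a₁,…,a_k, b]] = ⟨⟨a₁,…,a_k⟩⟩ ⊗ [1,b]`. -/
def qPf {k : ℕ} (a : Fin k → F) (b : F) :
    QuadraticForm F ((Fin k → Bool) → Fin 2 → F) :=
  sumScaled (pfC a) (binaryF F 1 b)

/-- Isometry of quadratic forms (possibly on different modules). -/
def Isom {M N : Type} [AddCommGroup M] [Module F M] [AddCommGroup N] [Module F N]
    (Q₁ : QuadraticForm F M) (Q₂ : QuadraticForm F N) : Prop :=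
  Nonempty (QuadraticMap.IsometryEquiv Q₁ Q₂)

/-- `ψ` is a (quadratic) factor of `φ`:  `φ ≅ ⟨⟨c⟩⟩ ⊗ ψ` for some bilinear Pfister form
`⟨⟨c₁,…,c_r⟩⟩` (with all slots nonzero). -/
def IsFactor {M N : Type} [AddCommGroup M] [Module F M] [AddCommGroup N] [Module F N]
    (ψ : QuadraticForm F M) (φ : QuadraticForm F N) : Prop :=
  ∃ (r : ℕ) (c : Fin r → F), (∀ i, c i ≠ 0) ∧ Isom φ (sumScaled (pfC c) ψ)

/-- The bilinear Pfister form `⟨⟨c⟩⟩` is a factor of `φ`:  `φ ≅ ⟨⟨c⟩⟩ ⊗ ψ` for some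
quadratic Pfister form `ψ`. -/
def IsBFactor {r : ℕ} {N : Type} [AddCommGroup N] [Module F N]
    (c : Fin r → F) (φ : QuadraticForm F N) : Prop :=
  ∃ (k : ℕ) (a : Fin k → F) (b : F), (∀ i, a i ≠ 0) ∧ Isom φ (sumScaled (pfC c) (qPf a b))

/-- `φ` and `π` have a common quadratic `j`-fold Pfister factor (for `j = 0` this is
interpreted as a trivial condition). -/
def HasCommonQPfFactor {M N : Type} [AddCommGroup M] [Module F M] [AddCommGroup N] [Module F N]
    (j : ℕ) (φ : QuadraticForm F M) (π : QuadraticForm F N) : Prop :=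
  match j with
  | 0 => True
  | k + 1 => ∃ (a : Fin k → F) (b : F), (∀ i, a i ≠ 0) ∧
      IsFactor (qPf a b) φ ∧ IsFactor (qPf a b) π

/-- The Witt index of a quadratic form: the largest number of hyperbolic planes that
split off. -/
def wittIndex {M : Type} [AddCommGroup M] [Module F M] (q : QuadraticForm F M) : ℕ :=
  sSup {m | ∃ (d : ℕ) (r : QuadraticForm F (Fin d → F)), Isom q ((mHyp F m).prod r)}

/-- A quadratic form is hyperbolic if it is an orthogonal sum of hyperbolic planes. -/
def IsHyp {M : Type} [AddCommGroup M] [Module F M] (q : QuadraticForm F M) : Prop :=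
  ∃ m : ℕ, Isom q (mHyp F m)

/-- Witt equivalence of quadratic forms. -/
def WittEquiv {M N : Type} [AddCommGroup M] [Module F M] [AddCommGroup N] [Module F N]
    (q₁ : QuadraticForm F M) (q₂ : QuadraticForm F N) : Prop :=
  ∃ m₁ m₂ : ℕ, Isom (q₁.prod (mHyp F m₁)) (q₂.prod (mHyp F m₂))

end PaperQF

namespace PaperQF
variable {F : Type} [Field F]

/-- The diagonal symmetric bilinear form with diagonal entries `w`. -/
def diagB {ι : Type} [Fintype ι] (w : ι → F) (x y : ι → F) : F := ∑ i, w i * x i * y i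

/-- Isometry of diagonal bilinear forms. -/
def DiagIsoB {ι κ : Type} [Fintype ι] [Fintype κ] (w : ι → F) (w' : κ → F) : Prop :=
  ∃ e : (ι → F) ≃ₗ[F] (κ → F), ∀ x y, diagB w' (e x) (e y) = diagB w x y

end PaperQF

/-! In characteristic 2 a totally singular quadratic form is additive, so an anisotropic one is
injective; hence two such forms on the same finite-dimensional space with the same value set are
isometric (`Q₁⁻¹ ∘ Q₂` is linear and bijective). The value set `D(θ)` of `Q(θ)` for
`θ = ⟨⟨a₁,…,aₙ⟩⟩` is the subfield `F²(a₁,…,aₙ)`, and separating one slot gives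
`D(⟨⟨γ⟩⟩ ⊗ θ') = S + γ S` with `S = D(θ')`. If `θ ≅ ⟨⟨x⟩⟩ ⊗ θ'` then `β = p + x r` with
`p, r ∈ S`, and `r ≠ 0` as `β ∉ S`; so `x ∈ S + β S`, whence `S + β S = S + x S`. -/

open Pointwise Set

lemma Set.mem_add_smul_iff {α : Type*} [Add α] [Mul α] {s t : Set α} {x y : α} :
    y ∈ s + x • t ↔ ∃ u ∈ s, ∃ w ∈ t, u + x * w = y := by
  simp only [mem_add, mem_smul_set, smul_eq_mul, exists_exists_and_eq_and]

lemma Subfield.coe_add_smul_eq_of_mem_add_smul {F : Type*} [Field F] (S : Subfield F) {x β : F}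
    (hβ : β ∈ (S : Set F) + x • (S : Set F)) (hβS : β ∉ S) :
    (S : Set F) + β • (S : Set F) = (S : Set F) + x • (S : Set F) := by
  obtain ⟨p, hp, r, hr, rfl⟩ := mem_add_smul_iff.mp hβ
  have hr0 : r ≠ 0 := by
    rintro rfl
    exact hβS (by simpa using hp)
  ext y
  simp only [mem_add_smul_iff, SetLike.mem_coe]
  constructor
  · rintro ⟨u, hu, w, hw, rfl⟩
    exact ⟨u + p * w, S.add_mem hu (S.mul_mem hp hw), r * w, S.mul_mem hr hw, by ring⟩
  · rintro ⟨u, hu, w, hw, rfl⟩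
    refine ⟨u - p * (w / r), S.sub_mem hu (S.mul_mem hp (S.div_mem hw hr)), w / r,
      S.div_mem hw hr, ?_⟩
    field_simp
    ring

lemma QuadraticMap.weightedSumSquares_add {R ι : Type*} [CommSemiring R] [CharP R 2] [Fintype ι]
    (w : ι → R) (x y : ι → R) :
    weightedSumSquares R w (x + y) = weightedSumSquares R w x + weightedSumSquares R w y := by
  simp only [weightedSumSquares_apply, Pi.add_apply, CharTwo.add_mul_self, smul_add,
    Finset.sum_add_distrib]

namespace PaperQF

variable {F : Type} [Field F]

lemma isom_of_range_eq {M : Type} [AddCommGroup M] [Module F M] [FiniteDimensional F M]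
    {Q₁ Q₂ : QuadraticForm F M} (hQ₁ : Q₁.Anisotropic)
    (hadd₁ : ∀ x y, Q₁ (x + y) = Q₁ x + Q₁ y) (hadd₂ : ∀ x y, Q₂ (x + y) = Q₂ x + Q₂ y)
    (hrange : range Q₁ = range Q₂) : Isom Q₁ Q₂ := by
  have hinj : Function.Injective Q₁ := fun x y hxy => by
    have h := hadd₁ (x - y) y
    rw [sub_add_cancel, hxy, right_eq_add] at h
    exact sub_eq_zero.mp (hQ₁ _ h)
  choose f hf using fun y => hrange.ge (mem_range_self (f := Q₂) y)
  let fL : M →ₗ[F] M :=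
    { toFun := f
      map_add' := fun y z => hinj (by rw [hadd₁, hf, hf, hf, hadd₂])
      map_smul' := fun a y => hinj (by simp only [hf, QuadraticMap.map_smul, RingHom.id_apply]) }
  have hsurj : Function.Surjective fL := fun z => by
    obtain ⟨y, hy⟩ := hrange.le (mem_range_self z)
    exact ⟨y, hinj ((hf y).trans hy)⟩
  exact ⟨(QuadraticMap.IsometryEquiv.mk (LinearEquiv.ofBijective fL
    ⟨LinearMap.injective_iff_surjective.mpr hsurj, hsurj⟩) hf).symm⟩

lemma DiagIsoB.range_weightedSumSquares_eq {ι κ : Type} [Fintype ι] [Fintype κ]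
    {w : ι → F} {w' : κ → F} (h : DiagIsoB w w') :
    range (weightedSumSquares F w) = range (weightedSumSquares F w') := by
  obtain ⟨E, hE⟩ := h
  have hQ : weightedSumSquares F w' ∘ E = weightedSumSquares F w := funext fun v => by
    simpa [diagB, mul_assoc] using hE v v
  rw [← hQ, E.surjective.range_comp]

def pfValues {n : ℕ} (a : Fin n → F) : Set F := range (weightedSumSquares F (pfC a))

lemma pfC_insertNth {n : ℕ} (a : Fin (n + 1) → F) (p : Fin (n + 1)) (b : Bool)
    (t : Fin n → Bool) :
    pfC a (p.insertNth b t) = (if b then a p else 1) * pfC (a ∘ p.succAbove) t := by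
  simp [pfC, Fin.prod_univ_succAbove _ p]

lemma weightedSumSquares_pfC_insertNth {n : ℕ} (a : Fin (n + 1) → F) (p : Fin (n + 1))
    (v : (Fin (n + 1) → Bool) → F) :
    weightedSumSquares F (pfC a) v =
      weightedSumSquares F (pfC (a ∘ p.succAbove)) (fun t => v (p.insertNth false t)) +
        a p * weightedSumSquares F (pfC (a ∘ p.succAbove)) (fun t => v (p.insertNth true t)) := by
  simp only [weightedSumSquares_apply, smul_eq_mul]
  rw [← (Fin.insertNthEquiv (fun _ => Bool) p).sum_comp, Fintype.sum_prod_type,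
    Fintype.sum_bool, Finset.mul_sum, add_comm]
  simp [Fin.insertNthEquiv, pfC_insertNth, mul_assoc]

lemma pfValues_insertNth {n : ℕ} (a : Fin (n + 1) → F) (p : Fin (n + 1)) :
    pfValues a = pfValues (a ∘ p.succAbove) + a p • pfValues (a ∘ p.succAbove) := by
  ext y
  simp only [mem_add_smul_iff, pfValues, mem_range, exists_exists_eq_and]
  constructor
  · rintro ⟨v, rfl⟩
    exact ⟨_, _, (weightedSumSquares_pfC_insertNth a p v).symm⟩
  · rintro ⟨u, w, rfl⟩
    refine ⟨fun s => if s p then w (p.removeNth s) else u (p.removeNth s), ?_⟩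
    simp [weightedSumSquares_pfC_insertNth a p]

lemma sq_mul_mem_pfValues {n : ℕ} (a : Fin n → F) (t : F) {y : F} (hy : y ∈ pfValues a) :
    t ^ 2 * y ∈ pfValues a := by
  obtain ⟨v, rfl⟩ := hy
  exact ⟨t • v, by rw [QuadraticMap.map_smul, smul_eq_mul, _root_.sq]⟩

lemma one_mem_pfValues {n : ℕ} (a : Fin n → F) : (1 : F) ∈ pfValues a :=
  ⟨Pi.single (fun _ => false) 1, by simp [pfC, Pi.single_apply]⟩

section CharTwo

variable [CharP F 2]

lemma add_mem_pfValues {n : ℕ} (a : Fin n → F) {y z : F} (hy : y ∈ pfValues a)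
    (hz : z ∈ pfValues a) : y + z ∈ pfValues a := by
  obtain ⟨v, rfl⟩ := hy
  obtain ⟨v', rfl⟩ := hz
  exact ⟨v + v', weightedSumSquares_add _ v v'⟩

/-- Separating the first slot, `(u + γ w) (u' + γ w') = (u u' + γ² w w') + γ (u w' + w u')`
with `γ² w w'` again in the value set of the remaining slots. -/
lemma mul_mem_pfValues {n : ℕ} (a : Fin n → F) {y z : F} (hy : y ∈ pfValues a)
    (hz : z ∈ pfValues a) : y * z ∈ pfValues a := by
  induction n generalizing y z with
  | zero =>
    obtain ⟨v, rfl⟩ := hy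
    have hsq : weightedSumSquares F (pfC a) v = v default ^ 2 := by
      simp [pfC, _root_.sq]
      congr 2 <;> exact Subsingleton.elim _ _
    rw [hsq]
    exact sq_mul_mem_pfValues a _ hz
  | succ n ih =>
    rw [pfValues_insertNth a 0, mem_add_smul_iff] at hy hz ⊢
    obtain ⟨u, hu, w, hw, rfl⟩ := hy
    obtain ⟨u', hu', w', hw', rfl⟩ := hz
    refine ⟨u * u' + a 0 ^ 2 * (w * w'), ?_, u * w' + w * u', ?_, by ring⟩
    · exact add_mem_pfValues _ (ih _ hu hu') (sq_mul_mem_pfValues _ _ (ih _ hw hw'))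
    · exact add_mem_pfValues _ (ih _ hu hw') (ih _ hw hu')

def pfValueField {n : ℕ} (a : Fin n → F) : Subfield F where
  carrier := pfValues a
  zero_mem' := by simpa using sq_mul_mem_pfValues a 0 (one_mem_pfValues a)
  one_mem' := one_mem_pfValues a
  add_mem' := add_mem_pfValues a
  neg_mem' := by simp [CharTwo.neg_eq]
  mul_mem' := mul_mem_pfValues a
  inv_mem' y hy := by
    have hinv : y⁻¹ = y⁻¹ ^ 2 * y := by
      rcases eq_or_ne y 0 with rfl | hy0
      · simp
      · field_simp
    rw [hinv]
    exact sq_mul_mem_pfValues a _ hy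

end CharTwo

end PaperQF

open PaperQF in
theorem statement5_general (F : Type) [Field F] [CharP F 2] (k : ℕ)
    (c : Fin (k + 1) → F)
    (hθaniso : (QuadraticMap.weightedSumSquares F (pfC c)).Anisotropic)
    (e : Fin k → F)
    (hfac : ∃ x : F, x ≠ 0 ∧ DiagIsoB (pfC (Fin.snoc e x)) (pfC c))
    (β : F)
    (hrep : ∃ v, QuadraticMap.weightedSumSquares F (pfC c) v = β)
    (hnrep : ¬ ∃ v, QuadraticMap.weightedSumSquares F (pfC e) v = β) :
    Isom (QuadraticMap.weightedSumSquares F (pfC c))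
      (QuadraticMap.weightedSumSquares F (pfC (Fin.cons β e))) := by
  obtain ⟨x, -, hiso⟩ := hfac
  have hθ : pfValues c = pfValues e + x • pfValues e :=
    calc pfValues c = pfValues (Fin.snoc e x) := hiso.range_weightedSumSquares_eq.symm
      _ = _ := by simpa using pfValues_insertNth (Fin.snoc e x) (Fin.last k)
  have hβθ' : pfValues (Fin.cons β e) = pfValues e + β • pfValues e := by
    simpa using pfValues_insertNth (Fin.cons β e) 0
  refine isom_of_range_eq hθaniso (weightedSumSquares_add _) (weightedSumSquares_add _) ?_
  change pfValues c = pfValues (Fin.cons β e)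
  rw [hβθ', hθ]
  exact ((pfValueField e).coe_add_smul_eq_of_mem_add_smul (hθ ▸ hrep) hnrep).symm

open PaperQF in
/-- Lemma 4.4. `char F = 2`.  Let `θ = ⟨⟨c₁,…,c_{k+1}⟩⟩` be an anisotropic
`(k+1)`-fold bilinear Pfister form and `θ' = ⟨⟨e₁,…,e_k⟩⟩` a `k`-fold bilinear Pfister factor
of `θ`.  If `β ∈ F^×` is represented by `Q(θ)` but not by `Q(θ')`, then
`Q(θ) ≅ Q(⟨⟨β⟩⟩ ⊗ θ')`. -/
theorem statement5 (F : Type) [Field F] [CharP F 2] (k : ℕ)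
    (c : Fin (k + 1) → F) (hc : ∀ i, c i ≠ 0)
    (hθaniso : (QuadraticMap.weightedSumSquares F (pfC c)).Anisotropic)
    (e : Fin k → F) (he : ∀ i, e i ≠ 0)
    (hfac : ∃ x : F, x ≠ 0 ∧ DiagIsoB (pfC (Fin.snoc e x)) (pfC c))
    (β : F) (hβ : β ≠ 0)
    (hrep : ∃ v, QuadraticMap.weightedSumSquares F (pfC c) v = β)
    (hnrep : ¬ ∃ v, QuadraticMap.weightedSumSquares F (pfC e) v = β) :
    Isom (QuadraticMap.weightedSumSquares F (pfC c))
      (QuadraticMap.weightedSumSquares F (pfC (Fin.cons β e))) :=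
  statement5_general F k c hθaniso e hfac β hrep hnrep
end
end
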